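/- Let u be a nonconstant inner function and let φ ∈ L∞(𝕋). Then for every f ∈ K_u (noting uf ∈ uH² ⊆ K_u^⊥), one has P_{K_u}(ū · D_φ(uf)) = A_φ f − A_ū(A_{φu} f). In particular, if φ ∈ H∞ then A_{φu} f = 0 for all f ∈ K_u and P_{K_u}(ū · D_φ(uf)) = A_φ f for all f ∈ K_u. -/

import Mathlib

open MeasureTheory Complex
open scoped InnerProductSpace ENNReal

noncomputable section

namespace DTTO

instance fact2pi : Fact (0 < 2 * Real.pi) := ⟨by positivity⟩

/-- The circle, realized as `ℝ / 2πℤ`. -/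
abbrev 𝕋c := AddCircle (2 * Real.pi)

/-- Normalized Haar (Lebesgue) measure on the circle. -/
abbrev μT : Measure 𝕋c := AddCircle.haarAddCircle

/-- `L²(𝕋)`. -/
abbrev L2 := Lp ℂ 2 μT

/-- `L∞(𝕋)`. -/
abbrev Linf := Lp ℂ ⊤ μT

lemma memL2_smul (φ : Linf) (f : L2) : MemLp (⇑φ • ⇑f) 2 μT :=
  (Lp.memLp f).smul (Lp.memLp φ)

/-- Multiplication operator `M_φ : L² → L²` by a function `φ ∈ L∞`. -/
def Mmul (φ : Linf) : L2 →L[ℂ] L2 :=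
  LinearMap.mkContinuous
    { toFun := fun f => (memL2_smul φ f).toLp _
      map_add' := fun f g => by
        refine Lp.ext ?_
        filter_upwards [MemLp.coeFn_toLp (memL2_smul φ (f + g)),
          MemLp.coeFn_toLp (memL2_smul φ f), MemLp.coeFn_toLp (memL2_smul φ g),
          Lp.coeFn_add f g,
          Lp.coeFn_add ((memL2_smul φ f).toLp _) ((memL2_smul φ g).toLp _)] with
            x h1 h2 h3 h4 h5
        rw [h1, h5]
        simp only [Pi.add_apply, h2, h3]
        simp only [Pi.smul_apply', h4, Pi.add_apply, smul_add]
      map_smul' := fun c f => by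
        refine Lp.ext ?_
        filter_upwards [MemLp.coeFn_toLp (memL2_smul φ (c • f)),
          MemLp.coeFn_toLp (memL2_smul φ f),
          Lp.coeFn_smul c f,
          Lp.coeFn_smul c ((memL2_smul φ f).toLp _)] with x h1 h2 h3 h4
        rw [h1, RingHom.id_apply, h4]
        simp only [Pi.smul_apply, Pi.smul_apply', h2, h3]
        exact smul_comm _ _ _ }
    ‖φ‖ (fun f => by
      simp only [LinearMap.coe_mk, AddHom.coe_mk]
      rw [Lp.norm_toLp, Lp.norm_def, Lp.norm_def]
      rw [← ENNReal.toReal_mul]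
      refine ENNReal.toReal_mono ?_ ?_
      · exact ENNReal.mul_ne_top (Lp.eLpNorm_ne_top φ) (Lp.eLpNorm_ne_top f)
      · exact eLpNorm_smul_le_eLpNorm_top_mul_eLpNorm 2 (Lp.aestronglyMeasurable f) ⇑φ)

/-- The canonical inclusion `L∞ ⊆ L²` (the measure is finite). -/
def toL2 (φ : Linf) : L2 := ((Lp.memLp φ).mono_exponent le_top).toLp _

/-- The Hardy space `H²`, the closed linear span in `L²` of the exponentials `e_n`, `n ≥ 0`. -/
def H2 : Submodule ℂ L2 :=
  (Submodule.span ℂ (Set.range fun n : ℕ => (fourierLp 2 (n : ℤ) : L2))).topologicalClosure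

instance : CompleteSpace H2 := (Submodule.isClosed_topologicalClosure _).completeSpace_coe

/-- `H²₋ = L² ⊖ H²`. -/
def Hminus : Submodule ℂ L2 := H2ᗮ

instance : CompleteSpace Hminus := (Submodule.isClosed_orthogonal _).completeSpace_coe

/-- `H∞ = H² ∩ L∞`. -/
def MemHinf (φ : Linf) : Prop := toL2 φ ∈ H2

/-- An inner function: an element of `H² ∩ L∞` of modulus one a.e. -/
structure IsInnerFn (u : Linf) : Prop where
  memH2 : MemHinf u
  unimod : ∀ᵐ z ∂μT, ‖u z‖ = 1

/-- `u` is nonconstant (not a.e. equal to a constant). -/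
def Nonconst (u : Linf) : Prop := ¬ ∃ c : ℂ, (⇑u : 𝕋c → ℂ) =ᵐ[μT] fun _ => c

/-- The subspace `uH²` of `L²`. -/
def uH2 (u : Linf) : Submodule ℂ L2 := H2.map (Mmul u).toLinearMap

/-- The model space `K_u = H² ⊖ uH² = H² ∩ (uH²)ᗮ`. -/
def Ku (u : Linf) : Submodule ℂ L2 := H2 ⊓ (uH2 u)ᗮ

lemma isClosed_Ku (u : Linf) : IsClosed ((Ku u : Set L2)) := by
  have h : (Ku u : Set L2) = (H2 : Set L2) ∩ ((uH2 u)ᗮ : Set L2) := rfl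
  rw [h]
  exact (Submodule.isClosed_topologicalClosure _).inter (Submodule.isClosed_orthogonal _)

instance (u : Linf) : CompleteSpace (Ku u) := (isClosed_Ku u).completeSpace_coe

/-- `K_u^⊥ = L² ⊖ K_u`. -/
def KuP (u : Linf) : Submodule ℂ L2 := (Ku u)ᗮ

instance (u : Linf) : CompleteSpace (KuP u) := (Submodule.isClosed_orthogonal _).completeSpace_coe

/-- Dual truncated Toeplitz operator `D_φ` on `K_u^⊥`. -/
def Dop (u φ : Linf) : KuP u →L[ℂ] KuP u :=
  (KuP u).orthogonalProjectionOnto ∘L Mmul φ ∘L (KuP u).subtypeL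

/-- Truncated Toeplitz operator `A_φ` on `K_u`. -/
def Aop (u φ : Linf) : Ku u →L[ℂ] Ku u :=
  (Ku u).orthogonalProjectionOnto ∘L Mmul φ ∘L (Ku u).subtypeL

/-- The operator `B_φ : K_u → K_u^⊥`, `B_φ f = (I - P_{K_u})(φ f)`. -/
def Bop (u φ : Linf) : Ku u →L[ℂ] KuP u :=
  (KuP u).orthogonalProjectionOnto ∘L Mmul φ ∘L (Ku u).subtypeL

/-- Toeplitz operator `T_φ : H² → H²`. -/
def Top (φ : Linf) : H2 →L[ℂ] H2 :=
  H2.orthogonalProjectionOnto ∘L Mmul φ ∘L H2.subtypeL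

/-- Hankel operator `H_φ : H² → H²₋`. -/
def Hop (φ : Linf) : H2 →L[ℂ] Hminus :=
  Hminus.orthogonalProjectionOnto ∘L Mmul φ ∘L H2.subtypeL

/-- The exponential `e₁(ζ) = ζ` as an element of `L∞`. -/
def e1 : Linf := fourierLp ⊤ 1

/-- The exponential `e₋₁(ζ) = ζ̄` as an element of `L∞`. -/
def eneg1 : Linf := fourierLp ⊤ (-1)

/-- The operator `Q : H²₋ → H²₋`, `Q g = P₋(e₁ g)`. -/
def Qop : Hminus →L[ℂ] Hminus :=
  Hminus.orthogonalProjectionOnto ∘L Mmul e1 ∘L Hminus.subtypeL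

/-- `u(0)`, the 0-th Fourier coefficient. -/
def coef0 (u : Linf) : ℂ := fourierCoeff (⇑u) 0

/-- Minimum modulus of a bounded operator. -/
def minMod {E F : Type*} [NormedAddCommGroup E] [NormedSpace ℂ E]
    [NormedAddCommGroup F] [NormedSpace ℂ F] (T : E →L[ℂ] F) : ℝ :=
  ⨅ x : {x : E // ‖x‖ = 1}, ‖T x.1‖

/-- Complex conjugation on `L∞`. -/
lemma memLinf_star (φ : Linf) : MemLp (fun z => (starRingEnd ℂ) (φ z)) ⊤ μT := by
  refine ⟨continuous_star.comp_aestronglyMeasurable (Lp.aestronglyMeasurable φ), ?_⟩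
  rw [eLpNorm_congr_norm_ae (g := ⇑φ) (Filter.Eventually.of_forall fun z => norm_star _)]
  exact Lp.eLpNorm_lt_top φ

/-- The complex conjugate `φ̄ ∈ L∞` of `φ ∈ L∞`. -/
def conjL (φ : Linf) : Linf := (memLinf_star φ).toLp _

lemma memLinf_mul (φ ψ : Linf) : MemLp (⇑φ • ⇑ψ) ⊤ μT :=
  (Lp.memLp ψ).smul (Lp.memLp φ)

/-- The pointwise product of two elements of `L∞`. -/
def mulL (φ ψ : Linf) : Linf := (memLinf_mul φ ψ).toLp _

end DTTO

namespace DTTO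

lemma inner_fourierLp_eq_zero {m n : ℤ} (h : m ≠ n) :
    (inner ℂ (fourierLp 2 m : L2) (fourierLp 2 n : L2) : ℂ) = 0 := by
  have hcoe := congrFun (coe_fourierBasis (T := 2 * Real.pi))
  have h2 := (fourierBasis (T := 2 * Real.pi)).orthonormal.2 (i := m) (j := n) h
  simpa only [hcoe] using h2

lemma span_le_orth_em1 :
    Submodule.span ℂ (Set.range fun n : ℕ => (fourierLp 2 (n : ℤ) : L2))
      ≤ (ℂ ∙ (fourierLp 2 (-1) : L2))ᗮ := by
  rw [Submodule.span_le]
  rintro x ⟨n, rfl⟩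
  rw [SetLike.mem_coe, Submodule.mem_orthogonal]
  intro w hw
  obtain ⟨c, rfl⟩ := Submodule.mem_span_singleton.1 hw
  rw [inner_smul_left, inner_fourierLp_eq_zero (by omega : (-1 : ℤ) ≠ (n : ℤ)), mul_zero]

lemma H2_le_orth_em1 : H2 ≤ (ℂ ∙ (fourierLp 2 (-1) : L2))ᗮ :=
  Submodule.topologicalClosure_minimal _ span_le_orth_em1 (Submodule.isClosed_orthogonal _)

/-- `e₋₁ ∈ H²₋`. -/
lemma em1_mem : (fourierLp 2 (-1) : L2) ∈ Hminus := by
  unfold Hminus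
  rw [Submodule.mem_orthogonal]
  intro v hv
  have h := H2_le_orth_em1 hv
  rw [Submodule.mem_orthogonal] at h
  exact inner_eq_zero_symm.mp (h _ (Submodule.mem_span_singleton_self _))

/-- `e₋₁` as an element of `H²₋`. -/
def em1 : Hminus := ⟨(fourierLp 2 (-1) : L2), em1_mem⟩

/-- For `f ∈ K_u`, the function `u f ∈ uH² ⊆ K_u^⊥`. -/
lemma mul_mem_KuP (u : Linf) (f : Ku u) : Mmul u (f : L2) ∈ KuP u := by
  unfold KuP
  rw [Submodule.mem_orthogonal]
  intro v hv
  have hv2 : v ∈ (uH2 u)ᗮ := (Submodule.mem_inf.1 hv).2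
  have hm : Mmul u (f : L2) ∈ uH2 u :=
    Submodule.mem_map_of_mem (Submodule.mem_inf.1 f.2).1
  rw [Submodule.mem_orthogonal] at hv2
  exact inner_eq_zero_symm.mp (hv2 _ hm)

lemma Ku_le_H2 (u : Linf) : Ku u ≤ H2 := inf_le_left

/-- The inclusion `K_u ⊆ H²` as a continuous linear map. -/
def KuIncl (u : Linf) : Ku u →L[ℂ] H2 :=
  LinearMap.mkContinuous (Submodule.inclusion (Ku_le_H2 u)) 1
    (fun f => by rw [one_mul]; exact le_of_eq rfl)

end DTTO

/-!
Because `D_φ (u f) = (I - P_{K_u})(φ u f)` and `ū u = 1` a.e., multiplying by `ū` gives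
`φ f - ū · P_{K_u}(φ u f)`, whose projection onto `K_u` is `A_φ f - A_ū (A_{φu} f)`.
If `φ ∈ H∞`, then `φ u f = u (φ f) ∈ uH² ⊆ K_u^⊥`, so `A_{φu} f = 0`.
-/

namespace DTTO

lemma coeFn_Mmul (φ : Linf) (f : L2) : ⇑(Mmul φ f) =ᵐ[μT] ⇑φ • ⇑f :=
  MemLp.coeFn_toLp (memL2_smul φ f)

lemma coeFn_conjL (φ : Linf) : ⇑(conjL φ) =ᵐ[μT] fun z => (starRingEnd ℂ) (φ z) :=
  MemLp.coeFn_toLp (memLinf_star φ)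

lemma coeFn_mulL (φ ψ : Linf) : ⇑(mulL φ ψ) =ᵐ[μT] ⇑φ • ⇑ψ :=
  MemLp.coeFn_toLp (memLinf_mul φ ψ)

lemma coeFn_toL2 (φ : Linf) : ⇑(toL2 φ) =ᵐ[μT] ⇑φ :=
  MemLp.coeFn_toLp _

lemma mulL_comm (φ ψ : Linf) : mulL φ ψ = mulL ψ φ := by
  refine Lp.ext ?_
  filter_upwards [coeFn_mulL φ ψ, coeFn_mulL ψ φ] with x hφψ hψφ
  simp only [hφψ, hψφ, Pi.smul_apply', smul_eq_mul, mul_comm]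

lemma Mmul_Mmul (φ ψ : Linf) (f : L2) : Mmul φ (Mmul ψ f) = Mmul (mulL φ ψ) f := by
  refine Lp.ext ?_
  filter_upwards [coeFn_Mmul φ (Mmul ψ f), coeFn_Mmul ψ f, coeFn_Mmul (mulL φ ψ) f,
    coeFn_mulL φ ψ] with x h₁ h₂ h₃ h₄
  simp only [h₁, h₂, h₃, h₄, Pi.smul_apply', smul_eq_mul, mul_assoc]

lemma Mmul_conjL_Mmul_mulL_of_norm_eq_one {u : Linf} (hu : ∀ᵐ z ∂μT, ‖u z‖ = 1)
    (φ : Linf) (f : L2) : Mmul (conjL u) (Mmul (mulL φ u) f) = Mmul φ f := by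
  refine Lp.ext ?_
  filter_upwards [coeFn_Mmul (conjL u) (Mmul (mulL φ u) f), coeFn_Mmul (mulL φ u) f,
    coeFn_mulL φ u, coeFn_conjL u, coeFn_Mmul φ f, hu] with x h₁ h₂ h₃ h₄ h₅ hx
  have hconj : (starRingEnd ℂ) (u x) * u x = 1 := by
    rw [← Complex.normSq_eq_conj_mul_self, Complex.normSq_eq_norm_sq, hx]
    norm_num
  simp only [h₁, h₂, h₃, h₄, h₅, Pi.smul_apply', smul_eq_mul]
  linear_combination (φ x * f x) * hconj

lemma Mmul_fourierLp (k m : ℤ) :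
    Mmul (fourierLp ⊤ k) (fourierLp 2 m) = (fourierLp 2 (k + m) : L2) := by
  refine Lp.ext ?_
  filter_upwards [coeFn_Mmul (fourierLp ⊤ k) (fourierLp 2 m), coeFn_fourierLp ⊤ k,
    coeFn_fourierLp 2 m, coeFn_fourierLp 2 (k + m)] with x h₁ h₂ h₃ h₄
  simp only [h₁, h₂, h₃, h₄, Pi.smul_apply', smul_eq_mul, fourier_add]

lemma Mmul_fourierLp_eq_Mmul_toL2 (φ : Linf) (n : ℤ) :
    Mmul φ (fourierLp 2 n) = Mmul (fourierLp ⊤ n) (toL2 φ) := by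
  refine Lp.ext ?_
  filter_upwards [coeFn_Mmul φ (fourierLp 2 n), coeFn_Mmul (fourierLp ⊤ n) (toL2 φ),
    coeFn_fourierLp ⊤ n, coeFn_fourierLp 2 n, coeFn_toL2 φ] with x h₁ h₂ h₃ h₄ h₅
  simp only [h₁, h₂, h₃, h₄, h₅, Pi.smul_apply', smul_eq_mul, mul_comm]

lemma fourierLp_mem_H2 (n : ℕ) : (fourierLp 2 (n : ℤ) : L2) ∈ H2 :=
  Submodule.le_topologicalClosure _ (Submodule.subset_span ⟨n, rfl⟩)

lemma H2_le_comap_of_fourierLp_mem (T : L2 →L[ℂ] L2)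
    (hT : ∀ n : ℕ, T (fourierLp 2 (n : ℤ)) ∈ H2) : H2 ≤ H2.comap (T : L2 →ₗ[ℂ] L2) := by
  refine Submodule.topologicalClosure_minimal _ ?_
    ((Submodule.isClosed_topologicalClosure _).preimage T.continuous)
  rw [Submodule.span_le]
  rintro _ ⟨n, rfl⟩
  exact hT n

lemma Mmul_mem_H2_of_memHinf {φ : Linf} (hφ : MemHinf φ) {f : L2} (hf : f ∈ H2) :
    Mmul φ f ∈ H2 := by
  -- `φ e_n = e_n φ`, and multiplication by `e_n` (`n ≥ 0`) maps each `e_m` into `H²`.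
  refine H2_le_comap_of_fourierLp_mem (Mmul φ) (fun n => ?_) hf
  rw [Mmul_fourierLp_eq_Mmul_toL2]
  refine H2_le_comap_of_fourierLp_mem (Mmul (fourierLp ⊤ (n : ℤ))) (fun m => ?_) hφ
  rw [Mmul_fourierLp, ← Nat.cast_add]
  exact fourierLp_mem_H2 (n + m)

lemma uH2_le_KuP (u : Linf) : uH2 u ≤ KuP u :=
  (Submodule.le_orthogonal_orthogonal _).trans (Submodule.orthogonal_le inf_le_right)

lemma coe_Dop_apply (u φ : Linf) (g : KuP u) :
    (Dop u φ g : L2) = Mmul φ g - (Ku u).starProjection (Mmul φ g) :=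
  (Ku u).starProjection_orthogonal_val _

lemma Aop_mulL_eq_zero_of_memHinf (u : Linf) {φ : Linf} (hφ : MemHinf φ) (f : Ku u) :
    Aop u (mulL φ u) f = 0 := by
  have hmem : Mmul (mulL φ u) (f : L2) ∈ uH2 u := by
    rw [mulL_comm, ← Mmul_Mmul]
    exact Submodule.mem_map_of_mem (Mmul_mem_H2_of_memHinf hφ (Ku_le_H2 u f.2))
  show (Ku u).orthogonalProjectionOnto (Mmul (mulL φ u) (f : L2)) = 0
  exact Submodule.orthogonalProjectionOnto_apply_of_mem_orthogonal (uH2_le_KuP u hmem)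

theorem Dphi_pullback_eq_Aphi_general (u φ : Linf) (hu : IsInnerFn u) :
    (∀ f : Ku u,
        (Ku u).orthogonalProjectionOnto
            (Mmul (conjL u) ((Dop u φ ⟨Mmul u (f : L2), mul_mem_KuP u f⟩ : L2)))
          = Aop u φ f - Aop u (conjL u) (Aop u (mulL φ u) f))
    ∧ (MemHinf φ →
        (∀ f : Ku u, Aop u (mulL φ u) f = 0)
        ∧ (∀ f : Ku u,
            (Ku u).orthogonalProjectionOnto
                (Mmul (conjL u) ((Dop u φ ⟨Mmul u (f : L2), mul_mem_KuP u f⟩ : L2)))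
              = Aop u φ f)) := by
  have pullback : ∀ f : Ku u,
      (Ku u).orthogonalProjectionOnto
          (Mmul (conjL u) ((Dop u φ ⟨Mmul u (f : L2), mul_mem_KuP u f⟩ : L2)))
        = Aop u φ f - Aop u (conjL u) (Aop u (mulL φ u) f) := by
    intro f
    rw [coe_Dop_apply, Mmul_Mmul, map_sub, map_sub,
      Mmul_conjL_Mmul_mulL_of_norm_eq_one hu.unimod]
    rfl
  refine ⟨pullback, fun hφ => ⟨Aop_mulL_eq_zero_of_memHinf u hφ, fun f => ?_⟩⟩
  rw [pullback, Aop_mulL_eq_zero_of_memHinf u hφ, map_zero, sub_zero]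

/-- For `f ∈ K_u`, `P_{K_u}(ū · D_φ(u f)) = A_φ f - A_ū (A_{φu} f)`; and if
`φ ∈ H∞`, then `A_{φu} f = 0` and `P_{K_u}(ū · D_φ(u f)) = A_φ f`. -/
theorem Dphi_pullback_eq_Aphi (u φ : Linf) (hu : IsInnerFn u) (hnc : Nonconst u) :
    (∀ f : Ku u,
        (Ku u).orthogonalProjectionOnto
            (Mmul (conjL u) ((Dop u φ ⟨Mmul u (f : L2), mul_mem_KuP u f⟩ : L2)))
          = Aop u φ f - Aop u (conjL u) (Aop u (mulL φ u) f))
    ∧ (MemHinf φ →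
        (∀ f : Ku u, Aop u (mulL φ u) f = 0)
        ∧ (∀ f : Ku u,
            (Ku u).orthogonalProjectionOnto
                (Mmul (conjL u) ((Dop u φ ⟨Mmul u (f : L2), mul_mem_KuP u f⟩ : L2)))
              = Aop u φ f)) :=
  Dphi_pullback_eq_Aphi_general u φ hu

end DTTO
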